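/- arXiv:1701.03946 — 2 statements merged into one kernel-verified Lean document; each statement's English description precedes it below -/
import Mathlib

section
/- Let z_1,...,z_n be complex numbers (n ≥ 2) and let p(z) = ∏_{k=1}^n (z - z_k). Define the (n-1)×(n-1) matrix M = D + (1/n)(z_1·I - D)·J, where D is the diagonal matrix with diagonal entries z_2, ..., z_n, J is the all-ones matrix, and I is the identity. Then the multiset of roots of the derivative p' equals the multiset of eigenvalues of M; equivalently, the characteristic polynomial of M equals (1/n)·p'(z). -/
/-!
The characteristic matrix of `M` is `diag(X - z_{k+1})` plus a rank-one matrix, so the matrix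
determinant lemma (applied over the fraction field of `ℂ[X]`, where that diagonal is invertible)
gives `charpoly M = q + (1/n) ∑ₖ (z_{k+1} - z₁) qₖ`, with `q = ∏ₖ (X - z_{k+1})` and
`qₖ = q / (X - z_{k+1})`. On the other side `p = (X - z₁) q`, and inserting
`X - z₁ = (X - z_{k+1}) + (z_{k+1} - z₁)` into the Leibniz rule gives
`p' = n q + ∑ₖ (z_{k+1} - z₁) qₖ`.
-/

open Polynomial Matrix Finset

namespace Matrix

variable {n : Type*} [Fintype n] [DecidableEq n]

theorem det_diagonal_add_replicateCol_mul_replicateRow_of_field {K : Type*} [Field K]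
    {d : n → K} (hd : ∀ k, d k ≠ 0) (u v : n → K) :
    (diagonal d + replicateCol Unit u * replicateRow Unit v).det =
      ∏ k, d k + ∑ k, u k * v k * ∏ j ∈ univ.erase k, d j := by
  have hdet : IsUnit (diagonal d).det := by
    simpa [det_diagonal, prod_ne_zero_iff] using hd
  have hinv : (diagonal d)⁻¹ = diagonal fun k => (d k)⁻¹ :=
    inv_eq_right_inv (by simp [diagonal_mul_diagonal, hd])
  rw [det_add_replicateCol_mul_replicateRow hdet, hinv, det_diagonal, det_unique]
  simp only [PUnit.default_eq_unit, add_apply, one_apply_eq, mul_apply, replicateRow_apply,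
    diagonal_apply, mul_ite, mul_zero, sum_ite_eq', mem_univ, ↓reduceIte, replicateCol_apply,
    mul_add, mul_one, mul_sum, add_right_inj]
  refine sum_congr rfl fun k _ => ?_
  rw [← mul_prod_erase univ d (mem_univ k)]
  field_simp [hd k]

theorem det_diagonal_add_replicateCol_mul_replicateRow {R : Type*} [CommRing R] [IsDomain R]
    {d : n → R} (hd : ∀ k, d k ≠ 0) (u v : n → R) :
    (diagonal d + replicateCol Unit u * replicateRow Unit v).det =
      ∏ k, d k + ∑ k, u k * v k * ∏ j ∈ univ.erase k, d j := by
  set f := algebraMap R (FractionRing R)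
  apply IsFractionRing.injective R (FractionRing R)
  have hfd : ∀ k, f (d k) ≠ 0 := fun k =>
    (map_ne_zero_iff f (IsFractionRing.injective R (FractionRing R))).mpr (hd k)
  have hmap : f.mapMatrix (diagonal d + replicateCol Unit u * replicateRow Unit v) =
      diagonal (fun k => f (d k)) +
        replicateCol Unit (fun k => f (u k)) * replicateRow Unit (fun k => f (v k)) := by
    ext i j
    by_cases h : i = j <;> simp [h, mul_apply]
  rw [RingHom.map_det, hmap]
  simpa [map_mul, map_prod] using
    det_diagonal_add_replicateCol_mul_replicateRow_of_field hfd
      (fun k => f (u k)) (fun k => f (v k))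

theorem charpoly_diagonal_add_replicateCol_mul_replicateRow {R : Type*} [CommRing R] [IsDomain R]
    (w u v : n → R) :
    (diagonal w + replicateCol Unit u * replicateRow Unit v).charpoly =
      ∏ k, (X - C (w k)) - ∑ k, C (u k * v k) * ∏ j ∈ univ.erase k, (X - C (w j)) := by
  have hchar : charmatrix (diagonal w + replicateCol Unit u * replicateRow Unit v) =
      diagonal (fun k => X - C (w k)) +
        replicateCol Unit (fun k => -C (u k)) * replicateRow Unit (fun k => C (v k)) := by
    ext i j : 1
    by_cases h : i = j
    · subst h
      simp only [charmatrix_apply_eq, add_apply, diagonal_apply_eq, mul_apply, univ_unique,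
        PUnit.default_eq_unit, replicateCol_apply, replicateRow_apply, sum_const, card_singleton,
        one_smul, map_add, map_mul, neg_mul]
      ring
    · simp [h, mul_apply]
  rw [charpoly, hchar, det_diagonal_add_replicateCol_mul_replicateRow (fun k => X_sub_C_ne_zero _)]
  simp [sub_eq_add_neg, map_mul]

end Matrix

theorem Polynomial.derivative_X_sub_C_mul_prod_X_sub_C {R ι : Type*} [CommRing R] [Fintype ι]
    [DecidableEq ι] (a : R) (w : ι → R) :
    derivative ((X - C a) * ∏ i, (X - C (w i))) =
      (Fintype.card ι + 1 : R[X]) * ∏ i, (X - C (w i)) +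
        ∑ i, C (w i - a) * ∏ j ∈ univ.erase i, (X - C (w j)) := by
  have hsplit : ∀ i, (X - C a) * ∏ j ∈ univ.erase i, (X - C (w j)) =
      ∏ j, (X - C (w j)) + C (w i - a) * ∏ j ∈ univ.erase i, (X - C (w j)) := fun i => by
    rw [← mul_prod_erase univ (fun j => X - C (w j)) (mem_univ i), C_sub]
    ring
  simp only [derivative_mul, derivative_sub, derivative_X, derivative_C, sub_zero, one_mul,
    derivative_prod_finset, mul_one, mul_sum, hsplit, sum_add_distrib, sum_const, card_univ,
    nsmul_eq_mul]
  ring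

theorem stmt_0_general (m : ℕ) (z : Fin (m + 1) → ℂ)
    (p : ℂ[X]) (hp : p = ∏ i, (X - C (z i)))
    (D : Matrix (Fin m) (Fin m) ℂ) (hD : D = Matrix.diagonal fun i => z i.succ)
    (J : Matrix (Fin m) (Fin m) ℂ) (hJ : J = Matrix.of fun _ _ => (1 : ℂ))
    (M : Matrix (Fin m) (Fin m) ℂ)
    (hM : M = D + ((m + 1 : ℂ))⁻¹ • ((z 0 • (1 : Matrix (Fin m) (Fin m) ℂ) - D) * J)) :
    M.charpoly = C ((m + 1 : ℂ))⁻¹ * derivative p := by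
  have hM' : M = diagonal (fun k : Fin m => z k.succ) +
      replicateCol Unit (fun k : Fin m => (m + 1 : ℂ)⁻¹ * (z 0 - z k.succ)) *
        replicateRow Unit (fun _ : Fin m => (1 : ℂ)) := by
    ext i j
    by_cases h : i = j <;> simp [hM, hD, hJ, h, mul_apply, diagonal_apply, one_apply]
  have hn : (m + 1 : ℂ) ≠ 0 := Nat.cast_add_one_ne_zero m
  rw [hM', charpoly_diagonal_add_replicateCol_mul_replicateRow, hp, Fin.prod_univ_succ,
    derivative_X_sub_C_mul_prod_X_sub_C, Fintype.card_fin]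
  have hC : ((m : ℂ[X]) + 1) = C ((m : ℂ) + 1) := by simp
  rw [hC, mul_add, ← mul_assoc, ← C_mul, inv_mul_cancel₀ hn, C_1, one_mul, mul_sum,
    sub_eq_add_neg, ← sum_neg_distrib]
  congr 1
  refine sum_congr rfl fun k _ => ?_
  simp only [map_mul, map_sub, mul_one]
  ring

/-- Cheung–Ng: the characteristic polynomial of
`M = D + (1/n)(z₁ I − D) J` equals `p'(z)/n`, where `p = ∏ (z − zⱼ)`. -/
theorem stmt_0 (m : ℕ) (hm : 1 ≤ m) (z : Fin (m + 1) → ℂ)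
    (p : ℂ[X]) (hp : p = ∏ i, (X - C (z i)))
    (D : Matrix (Fin m) (Fin m) ℂ) (hD : D = Matrix.diagonal fun i => z i.succ)
    (J : Matrix (Fin m) (Fin m) ℂ) (hJ : J = Matrix.of fun _ _ => (1 : ℂ))
    (M : Matrix (Fin m) (Fin m) ℂ)
    (hM : M = D + ((m + 1 : ℂ))⁻¹ • ((z 0 • (1 : Matrix (Fin m) (Fin m) ℂ) - D) * J)) :
    M.charpoly = C ((m + 1 : ℂ))⁻¹ * derivative p :=
  stmt_0_general m z p hp D hD J hJ M hM
end

section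
/- Let (a_n), (b_n) be sequences of positive reals with a_n → ∞, b_n → ∞, let f : ℝ → ℂ be bounded with ‖f‖_∞ = M and differentiable with ‖f'‖_∞ = M', and let (z_j^{(n)}) be a triangular array of reals such that (|b_{n-1} − b_n|/(a_{n-1} b_n b_{n-1}))·Σ_{j=1}^n |z_j^{(n)}| → 0 and n·|a_{n-1} − a_n|/(a_{n-1}a_n) → 0. Then (1/a_n)Σ_{j=1}^n f(z_j^{(n)}/b_n) − (1/a_{n-1})Σ_{j=2}^n f(z_j^{(n)}/b_{n-1}) → 0 as n → ∞. -/
open Filter Finset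

/-- `(1/aₙ)∑_{j=1}^n f(zⱼ⁽ⁿ⁾/bₙ) − (1/a_{n-1})∑_{j=2}^n f(zⱼ⁽ⁿ⁾/b_{n-1}) → 0`. -/
theorem stmt_19 (a b : ℕ → ℝ) (ha : ∀ n, 0 < a n) (hb : ∀ n, 0 < b n)
    (ha1 : Tendsto a atTop atTop) (hb1 : Tendsto b atTop atTop)
    (f : ℝ → ℂ) (M : ℝ) (hM : ∀ x, ‖f x‖ ≤ M)
    (hf : Differentiable ℝ f) (M' : ℝ) (hM' : ∀ x, ‖deriv f x‖ ≤ M')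
    (z : (n : ℕ) → Fin n → ℝ)
    (h1 : Tendsto (fun n : ℕ =>
        |b (n - 1) - b n| / (a (n - 1) * b n * b (n - 1)) * ∑ j, |z n j|)
      atTop (nhds 0))
    (h2 : Tendsto (fun n : ℕ => (n : ℝ) * |a (n - 1) - a n| / (a (n - 1) * a n))
      atTop (nhds 0)) :
    Tendsto (fun n : ℕ =>
        (1 / a n) * ∑ j, f (z n j / b n) -
          (1 / a (n - 1)) * ∑ j ∈ Finset.univ.filter (fun j : Fin n => (j : ℕ) ≠ 0),
            f (z n j / b (n - 1)))
      atTop (nhds 0) := by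
  have hM0 : 0 ≤ M := le_trans (norm_nonneg _) (hM 0)
  have hM'0 : 0 ≤ M' := le_trans (norm_nonneg _) (hM' 0)
  have lip : ∀ x y : ℝ, ‖f x - f y‖ ≤ M' * |x - y| := by
    intro x y
    have := Convex.norm_image_sub_le_of_norm_deriv_le (s := (Set.univ : Set ℝ))
      (fun t _ => hf t) (fun t _ => hM' t) convex_univ (Set.mem_univ y) (Set.mem_univ x)
    simpa [Real.norm_eq_abs] using this
  -- the dominating sequence
  set g : ℕ → ℝ := fun n =>
    M * ((n : ℝ) * |a (n - 1) - a n| / (a (n - 1) * a n)) + M * (1 / a (n - 1)) +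
      M' * (|b (n - 1) - b n| / (a (n - 1) * b n * b (n - 1)) * ∑ j, |z n j|) with hg
  have hglim : Tendsto g atTop (nhds 0) := by
    have t1 : Tendsto (fun n : ℕ => M * ((n : ℝ) * |a (n - 1) - a n| / (a (n - 1) * a n)))
        atTop (nhds 0) := by simpa using h2.const_mul M
    have t2 : Tendsto (fun n : ℕ => M * (1 / a (n - 1))) atTop (nhds 0) := by
      have : Tendsto (fun n : ℕ => a (n - 1)) atTop atTop :=
        ha1.comp (tendsto_sub_atTop_nat 1)
      simpa [one_div] using (this.inv_tendsto_atTop).const_mul M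
    have t3 : Tendsto (fun n : ℕ =>
        M' * (|b (n - 1) - b n| / (a (n - 1) * b n * b (n - 1)) * ∑ j, |z n j|))
        atTop (nhds 0) := by simpa using h1.const_mul M'
    have := (t1.add t2).add t3
    simpa [hg, one_div] using this
  apply squeeze_zero_norm _ hglim
  intro n
  set S0 : Finset (Fin n) := Finset.univ.filter (fun j : Fin n => (j : ℕ) = 0) with hS0
  set S1 : Finset (Fin n) := Finset.univ.filter (fun j : Fin n => (j : ℕ) ≠ 0) with hS1
  have hsplit : ∀ F : Fin n → ℂ, ∑ j, F j = ∑ j ∈ S0, F j + ∑ j ∈ S1, F j := by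
    intro F
    rw [hS0, hS1, Finset.sum_filter_add_sum_filter_not]
  set A : ℂ := (1 / (a n : ℂ) - 1 / (a (n - 1) : ℂ)) * ∑ j, f (z n j / b n) with hA
  set B : ℂ := (1 / (a (n - 1) : ℂ)) * ∑ j ∈ S0, f (z n j / b n) with hB
  set C : ℂ := (1 / (a (n - 1) : ℂ)) *
      ∑ j ∈ S1, (f (z n j / b n) - f (z n j / b (n - 1))) with hC
  have hdecomp : (1 / (a n : ℂ)) * ∑ j, f (z n j / b n) -
      (1 / (a (n - 1) : ℂ)) * ∑ j ∈ S1, f (z n j / b (n - 1)) = A + B + C := by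
    rw [hA, hB, hC, hsplit (fun j => f (z n j / b n)), Finset.sum_sub_distrib]
    ring
  rw [hdecomp]
  have han : 0 < a n := ha n
  have han1 : 0 < a (n - 1) := ha (n - 1)
  have hbn : 0 < b n := hb n
  have hbn1 : 0 < b (n - 1) := hb (n - 1)
  have hAbound : ‖A‖ ≤ M * ((n : ℝ) * |a (n - 1) - a n| / (a (n - 1) * a n)) := by
    rw [hA]
    have hsum : ‖∑ j, f (z n j / b n)‖ ≤ (n : ℝ) * M := by
      calc ‖∑ j, f (z n j / b n)‖ ≤ ∑ j : Fin n, ‖f (z n j / b n)‖ := norm_sum_le _ _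
        _ ≤ ∑ _j : Fin n, M := Finset.sum_le_sum (fun j _ => hM _)
        _ = (n : ℝ) * M := by simp [mul_comm]
    have hco : ‖(1 / (a n : ℂ) - 1 / (a (n - 1) : ℂ))‖ =
        |a (n - 1) - a n| / (a (n - 1) * a n) := by
      have hn : (a n : ℂ) ≠ 0 := by exact_mod_cast han.ne'
      have hn1 : (a (n - 1) : ℂ) ≠ 0 := by exact_mod_cast han1.ne'
      have h : (1 / (a n : ℂ) - 1 / (a (n - 1) : ℂ)) =
          (((a (n - 1) - a n) / (a (n - 1) * a n) : ℝ) : ℂ) := by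
        push_cast
        rw [div_sub_div _ _ hn hn1, div_eq_div_iff (mul_ne_zero hn hn1)
          (mul_ne_zero hn1 hn)]
        ring
      rw [h, Complex.norm_real, Real.norm_eq_abs, abs_div,
        abs_of_pos (mul_pos han1 han)]
    rw [norm_mul, hco]
    calc |a (n - 1) - a n| / (a (n - 1) * a n) * ‖∑ j, f (z n j / b n)‖
        ≤ |a (n - 1) - a n| / (a (n - 1) * a n) * ((n : ℝ) * M) := by
          exact mul_le_mul_of_nonneg_left hsum
            (div_nonneg (abs_nonneg _) (mul_pos han1 han).le)
      _ = M * ((n : ℝ) * |a (n - 1) - a n| / (a (n - 1) * a n)) := by ring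
  have hBbound : ‖B‖ ≤ M * (1 / a (n - 1)) := by
    rw [hB, norm_mul, norm_div, norm_one, Complex.norm_real, Real.norm_eq_abs,
      abs_of_pos han1]
    have hcard : S0.card ≤ 1 := by
      rw [Finset.card_le_one]
      intro i hi j hj
      rw [hS0, Finset.mem_filter] at hi hj
      exact Fin.ext (hi.2.trans hj.2.symm)
    have : ‖∑ j ∈ S0, f (z n j / b n)‖ ≤ M := by
      calc ‖∑ j ∈ S0, f (z n j / b n)‖ ≤ ∑ j ∈ S0, ‖f (z n j / b n)‖ := norm_sum_le _ _
        _ ≤ ∑ _j ∈ S0, M := Finset.sum_le_sum (fun j _ => hM _)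
        _ = S0.card * M := by simp [mul_comm]
        _ ≤ 1 * M := by
            apply mul_le_mul_of_nonneg_right _ hM0
            exact_mod_cast hcard
        _ = M := one_mul M
    calc (1 / a (n - 1)) * ‖∑ j ∈ S0, f (z n j / b n)‖
        ≤ (1 / a (n - 1)) * M :=
          mul_le_mul_of_nonneg_left this (one_div_nonneg.mpr han1.le)
      _ = M * (1 / a (n - 1)) := mul_comm _ _
  have hCbound : ‖C‖ ≤
      M' * (|b (n - 1) - b n| / (a (n - 1) * b n * b (n - 1)) * ∑ j, |z n j|) := by
    rw [hC, norm_mul, norm_div, norm_one, Complex.norm_real, Real.norm_eq_abs,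
      abs_of_pos han1]
    have hterm : ∀ j : Fin n, ‖f (z n j / b n) - f (z n j / b (n - 1))‖ ≤
        M' * (|z n j| * (|b (n - 1) - b n| / (b n * b (n - 1)))) := by
      intro j
      refine le_trans (lip _ _) ?_
      have : |z n j / b n - z n j / b (n - 1)| =
          |z n j| * (|b (n - 1) - b n| / (b n * b (n - 1))) := by
        have : z n j / b n - z n j / b (n - 1) =
            z n j * ((b (n - 1) - b n) / (b n * b (n - 1))) := by
          field_simp [hbn.ne', hbn1.ne']
        rw [this, abs_mul, abs_div, abs_of_pos (mul_pos hbn hbn1)]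
      rw [this]
    have hsum : ‖∑ j ∈ S1, (f (z n j / b n) - f (z n j / b (n - 1)))‖ ≤
        ∑ j : Fin n, M' * (|z n j| * (|b (n - 1) - b n| / (b n * b (n - 1)))) := by
      calc ‖∑ j ∈ S1, (f (z n j / b n) - f (z n j / b (n - 1)))‖
          ≤ ∑ j ∈ S1, ‖f (z n j / b n) - f (z n j / b (n - 1))‖ := norm_sum_le _ _
        _ ≤ ∑ j ∈ S1, M' * (|z n j| * (|b (n - 1) - b n| / (b n * b (n - 1)))) :=
            Finset.sum_le_sum (fun j _ => hterm j)
        _ ≤ ∑ j : Fin n, M' * (|z n j| * (|b (n - 1) - b n| / (b n * b (n - 1)))) := by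
            apply Finset.sum_le_sum_of_subset_of_nonneg (Finset.filter_subset _ _)
            intro j _ _
            exact mul_nonneg hM'0 (mul_nonneg (abs_nonneg _)
              (div_nonneg (abs_nonneg _) (mul_pos hbn hbn1).le))
    calc (1 / a (n - 1)) * ‖∑ j ∈ S1, (f (z n j / b n) - f (z n j / b (n - 1)))‖
        ≤ (1 / a (n - 1)) *
            ∑ j : Fin n, M' * (|z n j| * (|b (n - 1) - b n| / (b n * b (n - 1)))) :=
          mul_le_mul_of_nonneg_left hsum (one_div_nonneg.mpr han1.le)
      _ = M' * (|b (n - 1) - b n| / (a (n - 1) * b n * b (n - 1)) * ∑ j, |z n j|) := by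
          simp only [Finset.mul_sum]
          refine Finset.sum_congr rfl fun j _ => ?_
          field_simp
  calc ‖A + B + C‖ ≤ ‖A‖ + ‖B‖ + ‖C‖ := norm_add₃_le
    _ ≤ g n := by rw [hg]; exact add_le_add (add_le_add hAbound hBbound) hCbound
end
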